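/- Let 𝒜 be a Hom-finite Krull-Schmidt triangulated k-category. If every indecomposable object X of 𝒜 is a d_X-th Calabi-Yau object for some integer d_X, then 𝒜 has a Serre functor F satisfying F(X) ≅ X[d_X] for every indecomposable X. -/

import Mathlib

open CategoryTheory CategoryTheory.Limits CategoryTheory.Pretriangulated

universe v u

namespace CYPaper

variable (k : Type u) [Field k]
variable (C : Type u) [Category.{v} C] [Preadditive C] [Linear k C]
  [HasZeroObject C] [HasShift C ℤ] [∀ n : ℤ, (shiftFunctor C n).Additive]
  [Pretriangulated C]

/-- `X` is a `d`-th Calabi-Yau object: there is an isomorphism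
`Hom(X,-) ≅ D Hom(-, X⟦d⟧)`, natural in the variable. -/
def IsCYObj (d : ℤ) (X : C) : Prop :=
  ¬ IsZero X ∧
    ∃ η : ∀ Z : C, (X ⟶ Z) ≃ₗ[k] Module.Dual k (Z ⟶ X⟦d⟧),
      ∀ {Z W : C} (f : Z ⟶ W) (u : X ⟶ Z) (w : W ⟶ X⟦d⟧),
        η W (u ≫ f) w = η Z u (f ≫ w)

variable {C}

/-- A biproduct decomposition `X ≅ A ⊕ B`, expressed without assuming
the existence of biproducts. -/
def IsDecomp (X A B : C) : Prop :=
  ∃ (iA : A ⟶ X) (iB : B ⟶ X) (pA : X ⟶ A) (pB : X ⟶ B),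
    iA ≫ pA = 𝟙 A ∧ iB ≫ pB = 𝟙 B ∧ iA ≫ pB = 0 ∧ iB ≫ pA = 0 ∧
      pA ≫ iA + pB ≫ iB = 𝟙 X

/-- A direct sum decomposition `X ≅ X₁ ⊕ ⋯ ⊕ X_r`. -/
def IsDirectSumDecomp (X : C) {r : ℕ} (Xs : Fin r → C) : Prop :=
  ∃ (ι : ∀ j, Xs j ⟶ X) (π : ∀ j, X ⟶ Xs j),
    (∀ j, ι j ≫ π j = 𝟙 (Xs j)) ∧ (∀ j j', j ≠ j' → ι j ≫ π j' = 0) ∧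
      (∑ j, π j ≫ ι j) = 𝟙 X

/-- An object is indecomposable if it is non-zero and admits no non-trivial
direct sum decomposition. -/
def Indec (X : C) : Prop :=
  ¬ IsZero X ∧ ∀ A B : C, IsDecomp X A B → IsZero A ∨ IsZero B

variable (C) in
/-- The category is Krull-Schmidt: Hom-finite and any indecomposable object has
local endomorphism ring. -/
def KrullSchmidt : Prop :=
  ∀ X : C, Indec X → IsLocalRing (End X)

/-- Auslander-Reiten triangle. -/
def IsARTriangle (T : Triangle C) : Prop :=
  (T ∈ distTriang C) ∧ Indec T.obj₁ ∧ Indec T.obj₃ ∧ T.mor₃ ≠ 0 ∧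
    ∀ (Z' : C) (t : Z' ⟶ T.obj₃),
      (¬ ∃ s : T.obj₃ ⟶ Z', s ≫ t = 𝟙 T.obj₃) → ∃ t' : Z' ⟶ T.obj₂, t = t' ≫ T.mor₂

variable (C) in
/-- A right Serre functor on a Hom-finite `k`-linear category. -/
structure RightSerre where
  F : C ⥤ C
  additive : F.Additive
  linear : F.Linear k
  η : ∀ A B : C, (A ⟶ B) ≃ₗ[k] Module.Dual k (B ⟶ F.obj A)
  nat_right : ∀ {A B B' : C} (g : B ⟶ B') (u : A ⟶ B) (w : B' ⟶ F.obj A),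
    η A B' (u ≫ g) w = η A B u (g ≫ w)
  nat_left : ∀ {A A' B : C} (f : A' ⟶ A) (u : A ⟶ B) (w : B ⟶ F.obj A'),
    η A' B (f ≫ u) w = η A B u (w ≫ F.map f)

variable (C) in
/-- A Serre functor: a right Serre functor which is an equivalence. -/
structure Serre extends RightSerre k C where
  isEquiv : F.IsEquivalence

/-- A minimal `d`-th Calabi-Yau object: a `d`-th CY object no proper direct
summand of which is a `d`-th CY object. -/
def IsMinCYObj (d : ℤ) (X : C) : Prop :=
  IsCYObj k C d X ∧
    ∀ A B : C, IsDecomp X A B → ¬ IsZero B → ¬ IsCYObj k C d A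

end CYPaper

open CategoryTheory CategoryTheory.Limits CategoryTheory.Pretriangulated CYPaper

/-!
Every object `X` has a right Serre dual, an object `S X` with `Hom(-, S X) ≅ D Hom(X, -)`: for an
indecomposable `d`-th CY object it is `X⟦d⟧`, Serre duals of two summands give one of their sum,
and, inducting on `dim End X`, every object is a finite sum of indecomposables. By the Yoneda lemma
a choice `X ↦ S X` is a fully faithful right Serre functor.

For essential surjectivity let `Y` be indecomposable and `d`-th CY, and put `W = Y⟦-d⟧`. Serre
duality at `W` gives an Auslander-Reiten triangle `S W⟦-1⟧ → E → W → S W` (its third map is dual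
to a functional on the local ring `End W` vanishing on the nonunits), and the shift by `-d` of the
Auslander-Reiten triangle `Y⟦d⟧⟦-1⟧ → E' → Y → Y⟦d⟧` is another one ending at `W`. The first terms
of Auslander-Reiten triangles with the same end are isomorphic, so `S W ≅ Y`. The detour is needed
because the shift is not assumed to be `k`-linear, so the CY property of `Y` says nothing directly
about the Serre dual of `Y⟦-d⟧`.
-/

namespace CYPaper

section Decomposition

variable {C : Type*} [Category C] [Preadditive C]

lemma IsDecomp.symm {X A B : C} (h : IsDecomp X A B) : IsDecomp X B A := by
  obtain ⟨iA, iB, pA, pB, hAA, hBB, hAB, hBA, hsum⟩ := h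
  exact ⟨iB, iA, pB, pA, hBB, hAA, hBA, hAB, by rw [add_comm, hsum]⟩

lemma IsDecomp.map {D : Type*} [Category D] [Preadditive D] {X A B : C} (h : IsDecomp X A B)
    (F : C ⥤ D) [F.Additive] : IsDecomp (F.obj X) (F.obj A) (F.obj B) := by
  obtain ⟨iA, iB, pA, pB, hAA, hBB, hAB, hBA, hsum⟩ := h
  refine ⟨F.map iA, F.map iB, F.map pA, F.map pB, ?_, ?_, ?_, ?_, ?_⟩ <;>
    simp only [← F.map_comp, ← F.map_add, hAA, hBB, hAB, hBA, hsum, F.map_id, F.map_zero]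

lemma IsDecomp.of_iso {X Y A B : C} (h : IsDecomp X A B) (e : X ≅ Y) : IsDecomp Y A B := by
  obtain ⟨iA, iB, pA, pB, hAA, hBB, hAB, hBA, hsum⟩ := h
  refine ⟨iA ≫ e.hom, iB ≫ e.hom, e.inv ≫ pA, e.inv ≫ pB, by simp [hAA], by simp [hBB],
    by simp [hAB], by simp [hBA], ?_⟩
  rw [Category.assoc, Category.assoc, ← Preadditive.comp_add, ← Category.assoc pA,
    ← Category.assoc pB, ← Preadditive.add_comp, hsum, Category.id_comp, Iso.inv_hom_id]

lemma Indec.of_iso {X Y : C} (h : Indec X) (e : X ≅ Y) : Indec Y :=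
  ⟨fun hY => h.1 (hY.of_iso e), fun A B hAB => h.2 A B (hAB.of_iso e.symm)⟩

lemma isDecomp_biprod [HasBinaryBiproducts C] (A B : C) : IsDecomp (A ⊞ B) A B :=
  ⟨biprod.inl, biprod.inr, biprod.fst, biprod.snd, by simp, by simp, by simp, by simp,
    biprod.total⟩

lemma isDecomp_iff_nonempty_iso_biprod [HasBinaryBiproducts C] {X A B : C} :
    IsDecomp X A B ↔ Nonempty (X ≅ A ⊞ B) := by
  refine ⟨fun ⟨iA, iB, pA, pB, hAA, hBB, hAB, hBA, hsum⟩ => ?_, fun ⟨e⟩ =>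
    (isDecomp_biprod A B).of_iso e.symm⟩
  refine ⟨⟨biprod.lift pA pB, biprod.desc iA iB, by simp [hsum], ?_⟩⟩
  ext <;> simp [hAA, hBB, hAB, hBA]

lemma IsDecomp.finrank_end_lt (k : Type*) [Field k] [Linear k C]
    [∀ X Y : C, FiniteDimensional k (X ⟶ Y)] {X A B : C} (h : IsDecomp X A B) (hB : ¬IsZero B) :
    Module.finrank k (A ⟶ A) < Module.finrank k (X ⟶ X) := by
  obtain ⟨iA, iB, pA, pB, hAA, hBB, hAB, hBA, -⟩ := h
  let L : ((A ⟶ A) × (B ⟶ B)) →ₗ[k] (X ⟶ X) :=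
    (Linear.leftComp k X pA ∘ₗ Linear.rightComp k A iA).coprod
      (Linear.leftComp k X pB ∘ₗ Linear.rightComp k B iB)
  have hL : Function.LeftInverse (fun g : X ⟶ X => (iA ≫ g ≫ pA, iB ≫ g ≫ pB)) L := by
    rintro ⟨a, b⟩
    simp [L, reassoc_of% hAA, reassoc_of% hBB, reassoc_of% hAB, reassoc_of% hBA, hAA, hBB]
  have hle := LinearMap.finrank_le_finrank_of_injective (f := L) hL.injective
  have hpos : 0 < Module.finrank k (B ⟶ B) :=
    Module.finrank_pos_iff_exists_ne_zero.2 ⟨𝟙 B, fun h => hB (IsZero.iff_id_eq_zero _ |>.2 h)⟩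
  rw [Module.finrank_prod] at hle
  omega

theorem isDecomp_induction (k : Type*) [Field k] [Linear k C]
    [∀ X Y : C, FiniteDimensional k (X ⟶ Y)] {P : C → Prop} (zero : ∀ X, IsZero X → P X)
    (indec : ∀ X, Indec X → P X) (decomp : ∀ X A B, IsDecomp X A B → P A → P B → P X)
    (X : C) : P X := by
  induction hn : Module.finrank k (X ⟶ X) using Nat.strong_induction_on generalizing X with
  | _ n ih =>
  by_cases hX : IsZero X
  · exact zero X hX
  by_cases hXi : Indec X
  · exact indec X hXi
  obtain ⟨A, B, hAB, hA, hB⟩ : ∃ A B, IsDecomp X A B ∧ ¬IsZero A ∧ ¬IsZero B := by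
    simpa [Indec, hX] using hXi
  exact decomp X A B hAB (ih _ (hn ▸ hAB.finrank_end_lt k hB) A rfl)
    (ih _ (hn ▸ hAB.symm.finrank_end_lt k hA) B rfl)

end Decomposition

section Shift

variable {C : Type*} [Category C] [Preadditive C] [HasShift C ℤ]
  [∀ n : ℤ, (shiftFunctor C n).Additive]

lemma isZero_shift_iff {X : C} (n : ℤ) : IsZero (X⟦n⟧) ↔ IsZero X :=
  ⟨fun h => ((shiftFunctor C (-n)).map_isZero h).of_iso
    ((shiftFunctorCompIsoId C n (-n) (add_neg_cancel n)).app X).symm,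
   (shiftFunctor C n).map_isZero⟩

lemma Indec.shift {X : C} (h : Indec X) (n : ℤ) : Indec (X⟦n⟧) := by
  refine ⟨fun hX => h.1 ((isZero_shift_iff n).1 hX), fun A B hAB => ?_⟩
  have hX : Indec (X⟦n⟧⟦-n⟧) :=
    h.of_iso ((shiftFunctorCompIsoId C n (-n) (add_neg_cancel n)).app X).symm
  exact (hX.2 _ _ (hAB.map (shiftFunctor C (-n)))).imp
    (isZero_shift_iff _).1 (isZero_shift_iff _).1

end Shift

section SerreDual

variable {k : Type*} [Field k] {C : Type*} [Category C] [Preadditive C] [Linear k C]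

def tracePairing {X S : C} (θ : Module.Dual k (X ⟶ S)) (Z : C) :
    (Z ⟶ S) →ₗ[k] Module.Dual k (X ⟶ Z) :=
  (Linear.comp (S := k) X Z S).flip.compr₂ θ

@[simp]
lemma tracePairing_apply {X S Z : C} (θ : Module.Dual k (X ⟶ S)) (u : Z ⟶ S) (v : X ⟶ Z) :
    tracePairing θ Z u v = θ (v ≫ u) := rfl

variable (k) in
/-- A right Serre dual `Hom(-, obj) ≅ D Hom(X, -)` of `X`. By the Yoneda lemma such a natural
isomorphism is `tracePairing trace`, where `trace` is the image of `𝟙 obj`. -/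
structure SerreDual (X : C) where
  obj : C
  trace : Module.Dual k (X ⟶ obj)
  bijective (Z : C) : Function.Bijective (tracePairing trace Z)

namespace SerreDual

variable {X : C} (D : SerreDual k X)

noncomputable def equiv (Z : C) : (Z ⟶ D.obj) ≃ₗ[k] Module.Dual k (X ⟶ Z) :=
  LinearEquiv.ofBijective _ (D.bijective Z)

lemma trace_comp_equiv_symm {Z : C} (φ : Module.Dual k (X ⟶ Z)) (v : X ⟶ Z) :
    D.trace (v ≫ (D.equiv Z).symm φ) = φ v :=
  congrArg (· v) ((D.equiv Z).apply_symm_apply φ)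

lemma hom_ext {Z : C} {u u' : Z ⟶ D.obj} (h : ∀ v : X ⟶ Z, D.trace (v ≫ u) = D.trace (v ≫ u')) :
    u = u' :=
  (D.bijective Z).1 (LinearMap.ext h)

noncomputable def isoObj (D' : SerreDual k X) : D.obj ≅ D'.obj where
  hom := (D'.equiv D.obj).symm D.trace
  inv := (D.equiv D'.obj).symm D'.trace
  hom_inv_id := D.hom_ext fun v => by
    rw [← Category.assoc, trace_comp_equiv_symm, trace_comp_equiv_symm, Category.comp_id]
  inv_hom_id := D'.hom_ext fun v => by
    rw [← Category.assoc, trace_comp_equiv_symm, trace_comp_equiv_symm, Category.comp_id]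

/-- `f ↦ (u ↦ trace (f ≫ u))` -/
noncomputable def serreDuality (Y : C) [FiniteDimensional k (X ⟶ Y)] :
    (X ⟶ Y) ≃ₗ[k] Module.Dual k (Y ⟶ D.obj) :=
  (Module.evalEquiv k (X ⟶ Y)).trans (D.equiv Y).dualMap

noncomputable def ofIsZero (hX : IsZero X) : SerreDual k X where
  obj := X
  trace := 0
  bijective Z := by
    have : Subsingleton (Z ⟶ X) := ⟨hX.eq_of_tgt⟩
    have : Subsingleton (Module.Dual k (X ⟶ Z)) :=
      ⟨fun φ ψ => LinearMap.ext fun v => by rw [hX.eq_of_src v 0, map_zero, map_zero]⟩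
    exact ⟨Function.injective_of_subsingleton _, fun φ => ⟨0, Subsingleton.elim _ _⟩⟩

end SerreDual

lemma IsDecomp.nonempty_serreDual [HasBinaryBiproducts C] {X A B : C} (h : IsDecomp X A B)
    (DA : SerreDual k A) (DB : SerreDual k B) : Nonempty (SerreDual k X) := by
  obtain ⟨iA, iB, pA, pB, hAA, hBB, hAB, hBA, hsum⟩ := h
  -- the trace pairs only the diagonal blocks `A ⟶ S A` and `B ⟶ S B` of `v : X ⟶ S A ⊞ S B`
  refine ⟨⟨DA.obj ⊞ DB.obj,
    DA.trace ∘ₗ Linear.leftComp k _ iA ∘ₗ Linear.rightComp k X biprod.fst +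
      DB.trace ∘ₗ Linear.leftComp k _ iB ∘ₗ Linear.rightComp k X biprod.snd, fun Z => ⟨?_, ?_⟩⟩⟩
  · refine (injective_iff_map_eq_zero _).2 fun u hu => biprod.hom_ext _ _ ?_ ?_
    · refine DA.hom_ext fun a => ?_
      simpa [reassoc_of% hAA, reassoc_of% hBA] using LinearMap.congr_fun hu (pA ≫ a)
    · refine DB.hom_ext fun b => ?_
      simpa [reassoc_of% hAB, reassoc_of% hBB] using LinearMap.congr_fun hu (pB ≫ b)
  · intro φ
    refine ⟨biprod.lift ((DA.equiv Z).symm (φ ∘ₗ Linear.leftComp k Z pA))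
      ((DB.equiv Z).symm (φ ∘ₗ Linear.leftComp k Z pB)), LinearMap.ext fun v => ?_⟩
    simp only [tracePairing_apply, LinearMap.add_apply, LinearMap.comp_apply,
      Linear.leftComp_apply, Linear.rightComp_apply, Category.assoc, biprod.lift_fst,
      biprod.lift_snd]
    rw [← Category.assoc iA, ← Category.assoc iB, SerreDual.trace_comp_equiv_symm,
      SerreDual.trace_comp_equiv_symm]
    simp only [LinearMap.comp_apply, Linear.leftComp_apply, ← map_add, ← Category.assoc,
      ← Preadditive.add_comp, hsum, Category.id_comp]

end SerreDual

section SerreFunctor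

variable {k : Type u} [Field k] {C : Type u} [Category.{v} C] [Preadditive C] [Linear k C]
  [∀ X Y : C, FiniteDimensional k (X ⟶ Y)] (S : ∀ X : C, SerreDual k X)

noncomputable def serreMap (X Y : C) : (X ⟶ Y) ≃ₗ[k] ((S X).obj ⟶ (S Y).obj) :=
  ((S X).serreDuality Y).trans ((S Y).equiv (S X).obj).symm

lemma trace_comp_serreMap {X Y : C} (f : X ⟶ Y) (v : Y ⟶ (S X).obj) :
    (S Y).trace (v ≫ serreMap S X Y f) = (S X).trace (f ≫ v) :=
  (S Y).trace_comp_equiv_symm _ v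

noncomputable def serreFunctor : C ⥤ C where
  obj X := (S X).obj
  map f := serreMap S _ _ f
  map_id X := (S X).hom_ext fun v => by
    rw [trace_comp_serreMap, Category.id_comp, Category.comp_id]
  map_comp f g := (S _).hom_ext fun v => by
    rw [trace_comp_serreMap, ← Category.assoc, trace_comp_serreMap, ← Category.assoc,
      trace_comp_serreMap, Category.assoc]

instance : (serreFunctor S).Additive where
  map_add := map_add (serreMap S _ _) _ _

instance : (serreFunctor S).Linear k where
  map_smul f c := map_smul (serreMap S _ _) c f

noncomputable def serreFunctorFullyFaithful : (serreFunctor S).FullyFaithful where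
  preimage := (serreMap S _ _).symm
  map_preimage := (serreMap S _ _).apply_symm_apply
  preimage_map := (serreMap S _ _).symm_apply_apply

noncomputable def rightSerre : RightSerre k C where
  F := serreFunctor S
  additive := inferInstance
  linear := inferInstance
  η A B := (S A).serreDuality B
  nat_right g u w := congrArg (S _).trace (Category.assoc u g w)
  nat_left f u w := (congrArg (S _).trace (Category.assoc f u w)).trans <|
    (trace_comp_serreMap S f (u ≫ w)).symm.trans (congrArg (S _).trace (Category.assoc u w _))

end SerreFunctor

section AuslanderReiten

variable {C : Type*} [Category C]

def FactorsNonRetractions {E Z : C} (v : E ⟶ Z) : Prop :=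
  ∀ (V : C) (t : V ⟶ Z), (¬∃ s : Z ⟶ V, s ≫ t = 𝟙 Z) → ∃ t' : V ⟶ E, t = t' ≫ v

lemma FactorsNonRetractions.map {D : Type*} [Category D] {E Z : C} {v : E ⟶ Z}
    (hv : FactorsNonRetractions v) (F : C ⥤ D) [F.Full] [F.Faithful] [F.EssSurj] :
    FactorsNonRetractions (F.map v) := by
  intro V t ht
  let e := F.objObjPreimageIso V
  obtain ⟨t', ht'⟩ := hv _ (F.preimage (e.hom ≫ t)) fun ⟨s, hs⟩ =>
    ht ⟨F.map s ≫ e.hom, by rw [Category.assoc, ← F.map_preimage (e.hom ≫ t), ← F.map_comp, hs,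
      F.map_id]⟩
  refine ⟨e.inv ≫ F.map t', ?_⟩
  rw [Category.assoc, ← F.map_comp, ← ht', F.map_preimage, Iso.inv_hom_id_assoc]

lemma FactorsNonRetractions.units_smul [Preadditive C] {E Z : C} {v : E ⟶ Z}
    (hv : FactorsNonRetractions v) (ε : ℤˣ) : FactorsNonRetractions (ε • v) := by
  intro V t ht
  obtain ⟨t', rfl⟩ := hv V t ht
  exact ⟨ε⁻¹ • t', by rw [Linear.units_smul_comp, Linear.comp_units_smul, inv_smul_smul]⟩

lemma isIso_of_isIso_comp_of_isIso_comp {X Y : C} (f : X ⟶ Y) (g : Y ⟶ X) [IsIso (f ≫ g)]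
    [IsIso (g ≫ f)] : IsIso f :=
  have : Mono f := mono_of_mono f g
  have : IsSplitEpi f := IsSplitEpi.mk' ⟨inv (g ≫ f) ≫ g, by simp⟩
  isIso_of_mono_of_isSplitEpi f

variable [Preadditive C]

lemma isIso_of_comp_eq_self {X Z : C} [IsLocalRing (End X)] {w : Z ⟶ X} (hw : w ≠ 0)
    {g : End X} (h : w ≫ g = w) : IsIso g := by
  rw [← isUnit_iff_isIso]
  by_contra hg
  have hunit : IsUnit ((1 : End X) - g) :=
    (IsLocalRing.isUnit_or_isUnit_of_add_one (sub_add_cancel 1 g)).resolve_right hg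
  rw [isUnit_iff_isIso] at hunit
  refine hw ((Preadditive.IsIso.comp_right_eq_zero w ((1 : End X) - g)).1 ?_)
  rw [Preadditive.comp_sub, End.one_def, Category.comp_id, h, sub_self]

end AuslanderReiten

section LocalEnd

variable (k : Type*) [Field k] {C : Type*} [Category C] [Preadditive C] [Linear k C]

def nonunitsSubmodule (Z : C) [IsLocalRing (End Z)] : Submodule k (End Z) where
  __ := IsLocalRing.nonunitsAddSubmonoid (End Z)
  smul_mem' c g hg hcg := by
    rcases eq_or_ne c 0 with rfl | hc
    · rw [zero_smul] at hcg
      exact not_isUnit_zero hcg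
    · exact hg ((isUnit_smul_iff (Units.mk0 c hc) g).1 hcg)

variable {k}

lemma SerreDual.exists_ne_zero_comp_eq_zero {Z : C} [IsLocalRing (End Z)] (D : SerreDual k Z) :
    ∃ w : Z ⟶ D.obj, w ≠ 0 ∧
      ∀ (V : C) (t : V ⟶ Z), (¬∃ s : Z ⟶ V, s ≫ t = 𝟙 Z) → t ≫ w = 0 := by
  obtain ⟨φ, hφ, hker⟩ := (nonunitsSubmodule k Z).exists_le_ker_of_lt_top
    (lt_top_iff_ne_top.2 fun h => (h ▸ Submodule.mem_top : 𝟙 Z ∈ nonunitsSubmodule k Z) isUnit_one)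
  refine ⟨(D.equiv Z).symm φ, by simpa using hφ, fun V t ht => D.hom_ext fun g => ?_⟩
  rw [← Category.assoc, D.trace_comp_equiv_symm, comp_zero, map_zero]
  refine LinearMap.mem_ker.1 (hker fun hgt => ht ?_)
  have := (isUnit_iff_isIso _).1 hgt
  exact ⟨inv (g ≫ t) ≫ g, by simp⟩

end LocalEnd

section Triangulated

variable {k : Type u} [Field k] {C : Type u} [Category.{v} C] [Preadditive C] [Linear k C]
  [HasZeroObject C] [HasShift C ℤ] [∀ n : ℤ, (shiftFunctor C n).Additive] [Pretriangulated C]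

noncomputable def IsCYObj.serreDual [∀ X Y : C, FiniteDimensional k (X ⟶ Y)] {d : ℤ} {X : C}
    (h : IsCYObj k C d X) : SerreDual k X where
  obj := X⟦d⟧
  trace := h.2.choose X (𝟙 X)
  bijective Z := by
    convert ((Module.evalEquiv k (Z ⟶ X⟦d⟧)).trans (h.2.choose Z).dualMap).bijective
    ext u v
    simpa using (h.2.choose_spec v (𝟙 X) u).symm

lemma nonempty_serreDual [∀ X Y : C, FiniteDimensional k (X ⟶ Y)]
    (hCY : ∀ X : C, Indec X → ∃ d : ℤ, IsCYObj k C d X) (X : C) : Nonempty (SerreDual k X) :=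
  isDecomp_induction k (P := fun X => Nonempty (SerreDual k X)) (fun _ hX => ⟨.ofIsZero hX⟩)
    (fun X hX => (hCY X hX).elim fun _ h => ⟨h.serreDual⟩)
    (fun _ _ _ h ⟨DA⟩ ⟨DB⟩ => h.nonempty_serreDual DA DB) X

lemma exists_isARTriangle (hKS : KrullSchmidt C) {Z : C} (hZ : Indec Z) (D : SerreDual k Z)
    (hD : Indec D.obj) :
    ∃ (E : C) (u : D.obj⟦(-1 : ℤ)⟧ ⟶ E) (v : E ⟶ Z) (w : Z ⟶ D.obj⟦(-1 : ℤ)⟧⟦(1 : ℤ)⟧),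
      IsARTriangle (Triangle.mk u v w) := by
  have := hKS Z hZ
  obtain ⟨w, hw, hkill⟩ := D.exists_ne_zero_comp_eq_zero
  let e := (shiftFunctorCompIsoId C (-1 : ℤ) 1 (neg_add_cancel 1)).app D.obj
  obtain ⟨E, u, v, hT⟩ := distinguished_cocone_triangle₂ (w ≫ e.inv)
  refine ⟨E, u, v, w ≫ e.inv, hT, hD.shift (-1), hZ,
    fun h => hw ((Preadditive.IsIso.comp_right_eq_zero w e.inv).1 h),
    fun V (t : V ⟶ Z) ht => Triangle.coyoneda_exact₃ _ hT t ?_⟩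
  change t ≫ w ≫ e.inv = 0
  rw [← Category.assoc, hkill V t ht, zero_comp]

lemma IsARTriangle.shift {T : Triangle C} (hT : IsARTriangle T) (n : ℤ) :
    IsARTriangle ((Triangle.shiftFunctor C n).obj T) := by
  obtain ⟨hdist, h₁, h₃, hw, hv⟩ := hT
  refine ⟨Triangle.shift_distinguished T hdist n, h₁.shift n, h₃.shift n, ?_,
    (FactorsNonRetractions.map hv (shiftFunctor C n)).units_smul _⟩
  change n.negOnePow • ((shiftFunctor C n).map T.mor₃ ≫ (shiftFunctorComm C 1 n).hom.app T.obj₁)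
    ≠ 0
  rw [Ne, smul_eq_zero_iff_eq]
  simpa [Preadditive.IsIso.comp_right_eq_zero, Functor.map_eq_zero_iff] using hw

lemma IsARTriangle.exists_mor₃_comp_eq {T T' : Triangle C} (hT : IsARTriangle T)
    (hT' : IsARTriangle T') (e : T.obj₃ ≅ T'.obj₃) :
    ∃ c : T.obj₁⟦(1 : ℤ)⟧ ⟶ T'.obj₁⟦(1 : ℤ)⟧, T.mor₃ ≫ c = e.hom ≫ T'.mor₃ := by
  obtain ⟨hT, -, -, hw, -⟩ := hT
  obtain ⟨hT', -, -, -, hv'⟩ := hT'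
  obtain ⟨c, hc⟩ := hv' _ (T.mor₂ ≫ e.hom) fun ⟨s, hs⟩ => by
    have : IsSplitEpi T.mor₂ := IsSplitEpi.mk' ⟨e.hom ≫ s, by
      rw [← cancel_mono e.hom, Category.assoc, Category.assoc, hs, Category.comp_id,
        Category.id_comp]⟩
    exact hw (Triangle.mor₃_eq_zero_of_epi₂ T hT inferInstance)
  obtain ⟨c₃, hc₃, -⟩ := complete_distinguished_triangle_morphism _ _
    (rot_of_distTriang _ hT) (rot_of_distTriang _ hT') c e.hom hc
  exact ⟨c₃, hc₃⟩

lemma IsARTriangle.nonempty_iso_obj₁ (hKS : KrullSchmidt C) {T T' : Triangle C}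
    (hT : IsARTriangle T) (hT' : IsARTriangle T') (e : T.obj₃ ≅ T'.obj₃) :
    Nonempty (T.obj₁ ≅ T'.obj₁) := by
  obtain ⟨c, hc⟩ := hT.exists_mor₃_comp_eq hT' e
  obtain ⟨c', hc'⟩ := hT'.exists_mor₃_comp_eq hT e.symm
  obtain ⟨-, h₁, -, hw, -⟩ := hT
  obtain ⟨-, h₁', -, hw', -⟩ := hT'
  have := hKS _ (h₁.shift 1)
  have := hKS _ (h₁'.shift 1)
  have : IsIso (c ≫ c') :=
    isIso_of_comp_eq_self hw (by rw [reassoc_of% hc, hc', Iso.symm_hom, e.hom_inv_id_assoc])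
  have : IsIso (c' ≫ c) :=
    isIso_of_comp_eq_self hw' (by rw [reassoc_of% hc', Iso.symm_hom, hc, e.inv_hom_id_assoc])
  have := isIso_of_isIso_comp_of_isIso_comp c c'
  exact ⟨(shiftFunctor C (1 : ℤ)).preimageIso (asIso c)⟩

variable [∀ X Y : C, FiniteDimensional k (X ⟶ Y)]

lemma exists_serreDual_obj_iso (hKS : KrullSchmidt C)
    (hCY : ∀ X : C, Indec X → ∃ d : ℤ, IsCYObj k C d X) (S : ∀ X : C, SerreDual k X) {Y : C}
    (hY : Indec Y) : ∃ W : C, Nonempty ((S W).obj ≅ Y) := by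
  obtain ⟨d, hYd⟩ := hCY Y hY
  have hW : Indec (Y⟦-d⟧) := hY.shift (-d)
  obtain ⟨d', hWd'⟩ := hCY _ hW
  obtain ⟨_, _, _, _, hT⟩ := exists_isARTriangle hKS hW (S _)
    ((hW.shift d').of_iso ((S _).isoObj hWd'.serreDual).symm)
  obtain ⟨_, _, _, _, hT'⟩ := exists_isARTriangle hKS hY hYd.serreDual (hY.shift d)
  obtain ⟨e⟩ := hT.nonempty_iso_obj₁ hKS (hT'.shift (-d)) (Iso.refl _)
  -- `e : (S W)⟦-1⟧ ≅ Y⟦d⟧⟦-1⟧⟦-d⟧`, and the right side is `Y⟦-1⟧`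
  exact ⟨_, ⟨(shiftFunctor C (-1 : ℤ)).preimageIso (e ≪≫
    (shiftFunctor C (-d)).mapIso ((shiftFunctorComm C d (-1)).app Y) ≪≫
      (shiftFunctorCompIsoId C d (-d) (add_neg_cancel d)).app _)⟩⟩

lemma serreFunctor_essSurj (hKS : KrullSchmidt C)
    (hCY : ∀ X : C, Indec X → ∃ d : ℤ, IsCYObj k C d X) (S : ∀ X : C, SerreDual k X) :
    (serreFunctor S).EssSurj where
  mem_essImage := isDecomp_induction k (fun X hX => ⟨X, ⟨(S X).isoObj (.ofIsZero hX)⟩⟩)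
    (fun _ hX => exists_serreDual_obj_iso hKS hCY S hX)
    fun _ _ _ h ⟨WA, ⟨eA⟩⟩ ⟨WB, ⟨eB⟩⟩ => by
      obtain ⟨eX⟩ := isDecomp_iff_nonempty_iso_biprod.1 h
      obtain ⟨eW⟩ :=
        isDecomp_iff_nonempty_iso_biprod.1 ((isDecomp_biprod WA WB).map (serreFunctor S))
      exact ⟨WA ⊞ WB, ⟨eW ≪≫ biprod.mapIso eA eB ≪≫ eX.symm⟩⟩

lemma serreFunctor_isEquivalence (hKS : KrullSchmidt C)
    (hCY : ∀ X : C, Indec X → ∃ d : ℤ, IsCYObj k C d X) (S : ∀ X : C, SerreDual k X) :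
    (serreFunctor S).IsEquivalence where
  faithful := (serreFunctorFullyFaithful S).faithful
  full := (serreFunctorFullyFaithful S).full
  essSurj := serreFunctor_essSurj hKS hCY S

end Triangulated

end CYPaper

/-- **Statement 6** (Remark 3.6). Let `𝒜` be a Hom-finite Krull-Schmidt triangulated
`k`-category. If every indecomposable object `X` is a `d_X`-th Calabi-Yau object for
some integer `d_X`, then `𝒜` has a Serre functor `F` with `F(X) ≅ X⟦d_X⟧` for each
indecomposable `X`. -/
theorem stmt_6 (k : Type u) [Field k] (C : Type u) [Category.{v} C] [Preadditive C]
    [Linear k C] [HasZeroObject C] [HasShift C ℤ]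
    [∀ n : ℤ, (shiftFunctor C n).Additive] [Pretriangulated C]
    [∀ X Y : C, FiniteDimensional k (X ⟶ Y)]
    (hKS : KrullSchmidt C)
    (hCY : ∀ X : C, Indec X → ∃ d : ℤ, IsCYObj k C d X) :
    ∃ S : Serre k C, ∀ (X : C) (d : ℤ), Indec X → IsCYObj k C d X →
      Nonempty (S.F.obj X ≅ X⟦d⟧) := by
  let S X := (nonempty_serreDual hCY X).some
  exact ⟨⟨rightSerre S, serreFunctor_isEquivalence hKS hCY S⟩,
    fun X _ _ hXd => ⟨(S X).isoObj hXd.serreDual⟩⟩
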